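/- arXiv:1210.7054 — 3 statements merged into one kernel-verified Lean document; each statement's English description precedes it below -/
import Mathlib

section
/- The ℓ1-penalized semidefinite value φ = max{Tr ΣZ − λ‖Z‖₁ : Z ⪰ 0, Tr Z = 1} is an upper bound on the cardinality-penalized PCA value ψ = max{xᵀΣx − λ‖x‖₀ : ‖x‖₂ = 1}. -/
/-!
Lift a unit vector `x` to the rank-one matrix `Z = x xᵀ`: it is positive semidefinite with
`Tr Z = 1` and `Tr ΣZ = xᵀΣx`, while Cauchy–Schwarz on the support of `x` gives
`‖Z‖₁ = (∑ |xᵢ|)² ≤ ‖x‖₀ ‖x‖₂² = ‖x‖₀`. So `Z` is feasible for the semidefinite problem, with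
value at least the cardinality-penalized value of `x`.
-/

open Finset Matrix

theorem sq_sum_abs_le_card_support_mul_sum_sq {ι R : Type*} [Fintype ι] [Field R] [LinearOrder R]
    [IsStrictOrderedRing R] (x : ι → R) :
    (∑ i, |x i|) ^ 2 ≤ #{i | x i ≠ 0} * ∑ i, x i ^ 2 :=
  calc (∑ i, |x i|) ^ 2 = (∑ i with x i ≠ 0, |x i|) ^ 2 := by
        rw [sum_filter_of_ne fun i _ h => by simpa using h]
    _ ≤ #{i | x i ≠ 0} * ∑ i with x i ≠ 0, |x i| ^ 2 := sq_sum_le_card_mul_sum_sq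
    _ = #{i | x i ≠ 0} * ∑ i, x i ^ 2 := by
        simp only [sq_abs]
        rw [sum_filter_of_ne fun i _ h => by simpa using h]

theorem sum_sum_abs_vecMulVec_self {ι R : Type*} [Fintype ι] [CommRing R] [LinearOrder R]
    [IsOrderedRing R] (x : ι → R) :
    ∑ i, ∑ j, |vecMulVec x x i j| = (∑ i, |x i|) ^ 2 := by
  simp only [vecMulVec_apply, abs_mul, sq, sum_mul_sum]

theorem trace_mul_vecMulVec_self {ι R : Type*} [Fintype ι] [CommSemiring R]
    (M : Matrix ι ι R) (x : ι → R) :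
    (M * vecMulVec x x).trace = x ⬝ᵥ M *ᵥ x := by
  rw [mul_vecMulVec, trace_vecMulVec, dotProduct_comm]

theorem posSemidef_vecMulVec_self {ι : Type*} [Fintype ι] (x : ι → ℝ) :
    (vecMulVec x x).PosSemidef := by
  simpa using posSemidef_vecMulVec_self_star x

theorem trace_vecMulVec_self {ι R : Type*} [Fintype ι] [CommSemiring R] (x : ι → R) :
    (vecMulVec x x).trace = ∑ i, x i ^ 2 := by
  simp only [trace_vecMulVec, dotProduct, sq]

open Finset Matrix in
theorem dspca_upper_bounds_card_penalized_general (n : ℕ) (Sig : Matrix (Fin n) (Fin n) ℝ)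
    (lam : ℝ) (hlam : 0 ≤ lam) (φ ψ : ℝ)
    (hφ : IsGreatest {v : ℝ | ∃ Z : Matrix (Fin n) (Fin n) ℝ, Z.PosSemidef ∧ Z.trace = 1 ∧
            v = (Sig * Z).trace - lam * ∑ i, ∑ j, |Z i j|} φ)
    (hψ : IsGreatest {v : ℝ | ∃ x : Fin n → ℝ, (∑ i, (x i) ^ 2 = 1) ∧
            v = x ⬝ᵥ Sig.mulVec x - lam * ((Finset.univ.filter (fun i => x i ≠ 0)).card : ℝ)} ψ) :
    ψ ≤ φ := by
  obtain ⟨x, hx, rfl⟩ := hψ.1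
  have hZ := hφ.2 ⟨vecMulVec x x, posSemidef_vecMulVec_self x,
    (trace_vecMulVec_self x).trans hx, rfl⟩
  have hl1 := sq_sum_abs_le_card_support_mul_sum_sq x
  rw [trace_mul_vecMulVec_self, sum_sum_abs_vecMulVec_self] at hZ
  rw [hx, mul_one] at hl1
  linarith [mul_le_mul_of_nonneg_left hl1 hlam]

open Finset Matrix in
theorem dspca_upper_bounds_card_penalized (n : ℕ) (Sig : Matrix (Fin n) (Fin n) ℝ)
    (hSig : Sig.PosSemidef) (lam : ℝ) (hlam : 0 ≤ lam) (φ ψ : ℝ)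
    (hφ : IsGreatest {v : ℝ | ∃ Z : Matrix (Fin n) (Fin n) ℝ, Z.PosSemidef ∧ Z.trace = 1 ∧
            v = (Sig * Z).trace - lam * ∑ i, ∑ j, |Z i j|} φ)
    (hψ : IsGreatest {v : ℝ | ∃ x : Fin n → ℝ, (∑ i, (x i) ^ 2 = 1) ∧
            v = x ⬝ᵥ Sig.mulVec x - lam * ((Finset.univ.filter (fun i => x i ≠ 0)).card : ℝ)} ψ) :
    ψ ≤ φ :=
  dspca_upper_bounds_card_penalized_general n Sig lam hlam φ ψ hφ hψ
end

section
/- Safe feature elimination: with Σ = AᵀA, if the i-th diagonal entry satisfies Σ_{ii} = aᵢᵀaᵢ < λ, then (aᵢᵀξ)² < λ for every unit vector ξ, and hence feature i contributes zero to the objective Σⱼ((aⱼᵀξ)² − λ)₊ for every unit ξ. -/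
theorem sq_sum_mul_le_sum_sq_of_sum_sq_eq_one {ι : Type*} (s : Finset ι) (a ξ : ι → ℝ)
    (hξ : ∑ j ∈ s, ξ j ^ 2 = 1) :
    (∑ j ∈ s, a j * ξ j) ^ 2 ≤ ∑ j ∈ s, a j ^ 2 := by
  simpa only [hξ, mul_one] using Finset.sum_mul_sq_le_sq_mul_sq s a ξ

theorem safe_feature_elimination_general (m n : ℕ) (A : Matrix (Fin m) (Fin n) ℝ)
    (lam : ℝ) (i : Fin n)
    (hvar : ∑ j, (A j i) ^ 2 < lam) :
    ∀ ξ : Fin m → ℝ, (∑ j, (ξ j) ^ 2 = 1) →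
      (∑ j, A j i * ξ j) ^ 2 < lam ∧ max ((∑ j, A j i * ξ j) ^ 2 - lam) 0 = 0 := by
  intro ξ hξ
  have hlt : (∑ j, A j i * ξ j) ^ 2 < lam :=
    (sq_sum_mul_le_sum_sq_of_sum_sq_eq_one _ (fun j => A j i) ξ hξ).trans_lt hvar
  exact ⟨hlt, max_eq_right (sub_nonpos.2 hlt.le)⟩

theorem safe_feature_elimination (m n : ℕ) (A : Matrix (Fin m) (Fin n) ℝ)
    (lam : ℝ) (hlam : 0 < lam) (i : Fin n)
    (hvar : ∑ j, (A j i) ^ 2 < lam) :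
    ∀ ξ : Fin m → ℝ, (∑ j, (ξ j) ^ 2 = 1) →
      (∑ j, A j i * ξ j) ^ 2 < lam ∧ max ((∑ j, A j i * ξ j) ^ 2 - lam) 0 = 0 :=
  safe_feature_elimination_general m n A lam i hvar
end

section
/- Strong duality for the row subproblem inner part: for Y ⪰ 0 symmetric, s ∈ ℝ^{n−1}, λ ≥ 0, α > 0, max over y ∈ Range(Y) of (2yᵀs − 2λ‖y‖₁ − α yᵀY†y) = min over u with ‖u − s‖_∞ ≤ λ of (1/α) uᵀYu. -/
/-!
Weak duality: for `y = Y w` and `u` in the box `‖u - s‖_∞ ≤ λ`, Hölder gives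
`y ⬝ s - λ‖y‖₁ ≤ y ⬝ u = w ⬝ Y u`, while `y ⬝ Y† y = w ⬝ Y w` and Young's inequality
`2 w ⬝ Y u - α w ⬝ Y w ≤ α⁻¹ u ⬝ Y u` (from `(u - α w) ⬝ Y (u - α w) ≥ 0`) bound the primal
objective by the dual one. Strong duality: at a dual minimiser `u` the first-order condition over
the convex box, tested at the maximiser `s - λ sign y` of `y ⬝ ·`, forces equality in Hölder for
`y = α⁻¹ Y u`, so that `y` attains the dual value.
-/

open Finset Matrix Filter Topology

lemma nonneg_of_forall_pos_le_one_add_mul_nonneg {a b : ℝ}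
    (h : ∀ t : ℝ, 0 < t → t ≤ 1 → 0 ≤ a + t * b) : 0 ≤ a := by
  have hlim : Tendsto (fun t : ℝ => a + t * b) (𝓝[>] 0) (𝓝 a) := by
    refine ((?_ : Continuous fun t : ℝ => a + t * b).tendsto' 0 a (by simp)).mono_left
      nhdsWithin_le_nhds
    fun_prop
  refine ge_of_tendsto hlim ?_
  filter_upwards [Ioc_mem_nhdsGT one_pos] with t ht using h t ht.1 ht.2

variable {n : Type*}

lemma convex_setOf_forall_abs_sub_le (s : n → ℝ) (lam : ℝ) :
    Convex ℝ {u : n → ℝ | ∀ i, |u i - s i| ≤ lam} := by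
  simp only [Set.ofPred_forall]
  exact convex_iInter fun i =>
    (convex_closedBall (s i) lam).linear_preimage (LinearMap.proj (R := ℝ) (φ := fun _ => ℝ) i)

variable [Fintype n]

lemma dotProduct_sub_mul_sum_abs_le {s u y : n → ℝ} {lam : ℝ} (hu : ∀ i, |u i - s i| ≤ lam) :
    y ⬝ᵥ s - lam * ∑ i, |y i| ≤ y ⬝ᵥ u := by
  rw [dotProduct, dotProduct, mul_sum, ← sum_sub_distrib]
  gcongr with i
  calc y i * s i - lam * |y i| = y i * u i - (|y i| * lam - y i * (s i - u i)) := by ring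
    _ ≤ y i * u i := by
      have := abs_le.mp (abs_sub_comm (u i) (s i) ▸ hu i)
      rcases le_total 0 (y i) with hy | hy
      · rw [abs_of_nonneg hy]; nlinarith
      · rw [abs_of_nonpos hy]; nlinarith

lemma exists_abs_sub_le_dotProduct_eq {lam : ℝ} (hlam : 0 ≤ lam) (s y : n → ℝ) :
    ∃ u : n → ℝ, (∀ i, |u i - s i| ≤ lam) ∧ y ⬝ᵥ u = y ⬝ᵥ s - lam * ∑ i, |y i| := by
  refine ⟨fun i => s i - lam * SignType.sign (y i), fun i => ?_, ?_⟩
  · rw [sub_sub_cancel_left, abs_neg, abs_mul, abs_of_nonneg hlam]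
    exact mul_le_of_le_one_right hlam (by rcases lt_trichotomy (y i) 0 with h | h | h <;> simp [h])
  · simp only [dotProduct, mul_sum, ← sum_sub_distrib, mul_sub]
    refine sum_congr rfl fun i _ => ?_
    rw [← self_mul_sign (y i)]
    ring

variable {Y : Matrix n n ℝ}

lemma Matrix.IsSymm.dotProduct_mulVec_comm (hY : Y.IsSymm) (v w : n → ℝ) :
    v ⬝ᵥ Y *ᵥ w = w ⬝ᵥ Y *ᵥ v := by
  conv_lhs => rw [← hY.eq]
  exact dotProduct_transpose_mulVec Y v w

lemma Matrix.IsSymm.mulVec_dotProduct (hY : Y.IsSymm) (v w : n → ℝ) :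
    (Y *ᵥ v) ⬝ᵥ w = v ⬝ᵥ Y *ᵥ w := by
  rw [dotProduct_comm, hY.dotProduct_mulVec_comm]

lemma Matrix.IsSymm.mulVec_dotProduct_mulVec_of_mul_mul_eq {Yd : Matrix n n ℝ} (hY : Y.IsSymm)
    (hP : Y * Yd * Y = Y) (w : n → ℝ) : (Y *ᵥ w) ⬝ᵥ Yd *ᵥ (Y *ᵥ w) = w ⬝ᵥ Y *ᵥ w := by
  rw [hY.mulVec_dotProduct, mulVec_mulVec, mulVec_mulVec, hP]

lemma Matrix.IsSymm.dotProduct_mulVec_sub_nonneg_of_isMinOn (hY : Y.IsSymm) {C : Set (n → ℝ)}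
    (hC : Convex ℝ C) {u v : n → ℝ} (hu : u ∈ C) (hv : v ∈ C)
    (hmin : IsMinOn (fun x => x ⬝ᵥ Y *ᵥ x) C u) : 0 ≤ u ⬝ᵥ Y *ᵥ (v - u) := by
  suffices h : 0 ≤ 2 * (u ⬝ᵥ Y *ᵥ (v - u)) by linarith
  refine nonneg_of_forall_pos_le_one_add_mul_nonneg (b := (v - u) ⬝ᵥ Y *ᵥ (v - u))
    fun t ht0 ht1 => ?_
  have hmem : u + t • (v - u) ∈ C := hC.add_smul_sub_mem hu hv ⟨ht0.le, ht1⟩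
  have hexpand : (u + t • (v - u)) ⬝ᵥ Y *ᵥ (u + t • (v - u)) = u ⬝ᵥ Y *ᵥ u
      + t * (2 * (u ⬝ᵥ Y *ᵥ (v - u)) + t * ((v - u) ⬝ᵥ Y *ᵥ (v - u))) := by
    simp only [mulVec_add, mulVec_smul, dotProduct_add, add_dotProduct, dotProduct_smul,
      smul_dotProduct, smul_eq_mul, hY.dotProduct_mulVec_comm (v - u) u]
    ring
  have := hmin hmem
  simp only [Set.mem_ofPred_eq, hexpand] at this
  exact nonneg_of_mul_nonneg_right (by linarith) ht0

lemma Matrix.PosSemidef.two_mul_dotProduct_mulVec_sub_le (hY : Y.PosSemidef) {α : ℝ}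
    (hα : 0 < α) (u w : n → ℝ) : 2 * (w ⬝ᵥ Y *ᵥ u) - α * (w ⬝ᵥ Y *ᵥ w) ≤ α⁻¹ * (u ⬝ᵥ Y *ᵥ u) := by
  have hS : Y.IsSymm := by simpa using hY.1
  have hnonneg : 0 ≤ (u - α • w) ⬝ᵥ Y *ᵥ (u - α • w) := by
    simpa using hY.dotProduct_mulVec_nonneg (u - α • w)
  have hexpand : (u - α • w) ⬝ᵥ Y *ᵥ (u - α • w) =
      u ⬝ᵥ Y *ᵥ u - α * (2 * (w ⬝ᵥ Y *ᵥ u) - α * (w ⬝ᵥ Y *ᵥ w)) := by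
    simp only [mulVec_sub, mulVec_smul, dotProduct_sub, sub_dotProduct, dotProduct_smul,
      smul_dotProduct, smul_eq_mul, hS.dotProduct_mulVec_comm u w]
    ring
  rw [le_inv_mul_iff₀ hα]
  linarith

variable {Yd : Matrix n n ℝ} {s : n → ℝ} {lam α : ℝ}

lemma row_weak_duality (hY : Y.PosSemidef) (hP : Y * Yd * Y = Y) (hα : 0 < α) {u : n → ℝ}
    (hu : ∀ i, |u i - s i| ≤ lam) (w : n → ℝ) :
    2 * ((Y *ᵥ w) ⬝ᵥ s) - 2 * lam * ∑ i, |(Y *ᵥ w) i| - α * ((Y *ᵥ w) ⬝ᵥ Yd *ᵥ (Y *ᵥ w))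
      ≤ 1 / α * (u ⬝ᵥ Y *ᵥ u) := by
  have hS : Y.IsSymm := by simpa using hY.1
  have hholder := dotProduct_sub_mul_sum_abs_le (y := Y *ᵥ w) hu
  have hyoung := hY.two_mul_dotProduct_mulVec_sub_le hα u w
  rw [hS.mulVec_dotProduct_mulVec_of_mul_mul_eq hP, one_div]
  rw [hS.mulVec_dotProduct w u] at hholder
  linarith

lemma row_primal_value_of_isMinOn (hY : Y.IsSymm) (hP : Y * Yd * Y = Y) (hlam : 0 ≤ lam)
    (hα : 0 < α) {u : n → ℝ} (hu : ∀ i, |u i - s i| ≤ lam)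
    (hmin : IsMinOn (fun x => x ⬝ᵥ Y *ᵥ x) {x | ∀ i, |x i - s i| ≤ lam} u) :
    2 * ((Y *ᵥ (α⁻¹ • u)) ⬝ᵥ s) - 2 * lam * ∑ i, |(Y *ᵥ (α⁻¹ • u)) i|
      - α * ((Y *ᵥ (α⁻¹ • u)) ⬝ᵥ Yd *ᵥ (Y *ᵥ (α⁻¹ • u))) = 1 / α * (u ⬝ᵥ Y *ᵥ u) := by
  set y := Y *ᵥ (α⁻¹ • u)
  have hy : ∀ x, y ⬝ᵥ x = α⁻¹ * (u ⬝ᵥ Y *ᵥ x) := fun x => by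
    rw [hY.mulVec_dotProduct, smul_dotProduct, smul_eq_mul]
  obtain ⟨v, hv, hyv⟩ := exists_abs_sub_le_dotProduct_eq hlam s y
  have hopt := hY.dotProduct_mulVec_sub_nonneg_of_isMinOn
    (convex_setOf_forall_abs_sub_le s lam) hu hv hmin
  have hslack : y ⬝ᵥ u ≤ y ⬝ᵥ v := by
    have := mul_nonneg (inv_nonneg.mpr hα.le) hopt
    rw [← hy, dotProduct_sub] at this
    linarith
  have hholder := dotProduct_sub_mul_sum_abs_le (y := y) hu
  have hquad : y ⬝ᵥ Yd *ᵥ y = α⁻¹ * (α⁻¹ * (u ⬝ᵥ Y *ᵥ u)) := by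
    rw [hY.mulVec_dotProduct_mulVec_of_mul_mul_eq hP, mulVec_smul, dotProduct_smul,
      smul_dotProduct, smul_eq_mul, smul_eq_mul]
  rw [hquad, one_div, ← mul_assoc α, mul_inv_cancel₀ hα.ne', one_mul]
  linarith [hy u]

open Finset Matrix in
theorem row_subproblem_strong_duality_general (k : ℕ) (Y Yd : Matrix (Fin k) (Fin k) ℝ)
    (hY : Y.PosSemidef)
    (hP1 : Y * Yd * Y = Y)
    (s : Fin k → ℝ) (lam α : ℝ) (hlam : 0 ≤ lam) (hα : 0 < α) (p d : ℝ)
    (hp : IsGreatest {v : ℝ | ∃ y : Fin k → ℝ, (∃ w, y = Y.mulVec w) ∧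
            v = 2 * (y ⬝ᵥ s) - 2 * lam * (∑ i, |y i|) - α * (y ⬝ᵥ Yd.mulVec y)} p)
    (hd : IsLeast {v : ℝ | ∃ u : Fin k → ℝ, (∀ i, |u i - s i| ≤ lam) ∧
            v = (1 / α) * (u ⬝ᵥ Y.mulVec u)} d) :
    p = d := by
  obtain ⟨⟨u, hu, rfl⟩, hdmin⟩ := hd
  obtain ⟨⟨_, ⟨w, rfl⟩, rfl⟩, hpmax⟩ := hp
  have hmin : IsMinOn (fun x => x ⬝ᵥ Y *ᵥ x) {x | ∀ i, |x i - s i| ≤ lam} u := fun x hx =>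
    le_of_mul_le_mul_left (hdmin ⟨x, hx, rfl⟩) (one_div_pos.mpr hα)
  have hS : Y.IsSymm := by simpa using hY.1
  exact le_antisymm (row_weak_duality hY hP1 hα hu w)
    (hpmax ⟨_, ⟨α⁻¹ • u, rfl⟩, (row_primal_value_of_isMinOn hS hP1 hlam hα hu hmin).symm⟩)

open Finset Matrix in
theorem row_subproblem_strong_duality (k : ℕ) (Y Yd : Matrix (Fin k) (Fin k) ℝ)
    (hY : Y.PosSemidef)
    (hP1 : Y * Yd * Y = Y) (hP2 : Yd * Y * Yd = Yd)
    (hP3 : (Y * Yd)ᵀ = Y * Yd) (hP4 : (Yd * Y)ᵀ = Yd * Y)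
    (s : Fin k → ℝ) (lam α : ℝ) (hlam : 0 ≤ lam) (hα : 0 < α) (p d : ℝ)
    (hp : IsGreatest {v : ℝ | ∃ y : Fin k → ℝ, (∃ w, y = Y.mulVec w) ∧
            v = 2 * (y ⬝ᵥ s) - 2 * lam * (∑ i, |y i|) - α * (y ⬝ᵥ Yd.mulVec y)} p)
    (hd : IsLeast {v : ℝ | ∃ u : Fin k → ℝ, (∀ i, |u i - s i| ≤ lam) ∧
            v = (1 / α) * (u ⬝ᵥ Y.mulVec u)} d) :
    p = d :=
  row_subproblem_strong_duality_general k Y Yd hY hP1 s lam α hlam hα p d hp hd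
end
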